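/- Let N ≥ 1 and L ≥ 1 be real numbers, let W : ℤ³ → ℝ satisfy W_{−j} = W_j for all j ∈ ℤ³, and let v : ℝ → (ℤ³ → ℂ) be continuous with v_ℓ(t) = 0 for all t whenever ⟨ℓ⟩ > L. Suppose Ψ : ℝ → (ℤ³ → ℂ) is such that each Ψ_k is continuously differentiable, Ψ_k(t) = 0 for all t unless N/2 < ⟨k⟩ ≤ N, and for every t ∈ ℝ and every k ∈ ℤ³ with N/2 < ⟨k⟩ ≤ N one has Ψ_k'(t) = −i ∑ e^{it(|k₁|² − |k₂|² + |k₃|² − |k|²)} W_{k₁ − k₂} v_{k₁}(t) \overline{v_{k₂}(t)} Ψ_{k₃}(t), the sum being over all (k₁, k₂, k₃) ∈ (ℤ³)³ with k₁ − k₂ + k₃ = k and k₂ ∉ {k₁, k₃} (a finite sum, by the support assumptions on v and Ψ). Then t ↦ ∑_{k ∈ ℤ³} |Ψ_k(t)|² is constant in t; in particular the solution operator of this linear equation preserves the ℓ² norm on the annulus {k : N/2 < ⟨k⟩ ≤ N}. -/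

import Mathlib

open scoped BigOperators

noncomputable section

/-- Japanese bracket `⟨k⟩ = (1 + |k|²)^{1/2}` of a point of `ℤ³`. -/
def jap3 (k : Fin 3 → ℤ) : ℝ := Real.sqrt (1 + ∑ i, ((k i : ℝ)) ^ 2)

/-- Squared Euclidean norm `|k|²` as an integer. -/
def nsq3 (k : Fin 3 → ℤ) : ℤ := ∑ i, (k i) ^ 2

def jbox (C : ℝ) : Finset (Fin 3 → ℤ) :=
  Finset.Icc (fun _ => -(⌈C⌉ + 1)) (fun _ => ⌈C⌉ + 1)

lemma lt_jap3_of_not_mem_jbox {C : ℝ} {k : Fin 3 → ℤ} (h : k ∉ jbox C) :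
    C < jap3 k := by
  have hmem : ¬ ((fun _ : Fin 3 => -(⌈C⌉ + 1)) ≤ k ∧ k ≤ fun _ : Fin 3 => (⌈C⌉ + 1)) := by
    simpa [jbox, Finset.mem_Icc] using h
  have hex : ∃ i, (⌈C⌉ + 1 : ℤ) ≤ |k i| := by
    rw [not_and_or] at hmem
    rcases hmem with h' | h' <;>
    · rw [Pi.le_def] at h'; push_neg at h'
      obtain ⟨i, hi⟩ := h'
      exact ⟨i, by rcases abs_cases (k i) with ⟨h1, _⟩ | ⟨h1, _⟩ <;> omega⟩
  obtain ⟨i, hi⟩ := hex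
  have h2 : C < |((k i : ℝ))| := by
    have h3 : ((⌈C⌉ : ℝ) + 1) ≤ |((k i : ℝ))| := by
      have : ((⌈C⌉ + 1 : ℤ) : ℝ) ≤ ((|k i| : ℤ) : ℝ) := by exact_mod_cast hi
      simpa [Int.cast_abs] using this
    have := Int.le_ceil C
    linarith
  have h3 : |((k i : ℝ))| ≤ jap3 k := by
    rw [← Real.sqrt_sq_eq_abs]
    apply Real.sqrt_le_sqrt
    have : ((k i : ℝ)) ^ 2 ≤ ∑ j, ((k j : ℝ)) ^ 2 :=
      Finset.single_le_sum (f := fun j => ((k j : ℝ)) ^ 2) (fun j _ => by positivity)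
        (Finset.mem_univ i)
    linarith
  linarith

/-- Mass conservation / unitarity (Section 3.2) for the linear equation (3.2) defining the
random averaging matrices: if `Ψ` is supported on the annulus `N/2 < ⟨k⟩ ≤ N` and solves
`Ψ_k' = -i ∑ e^{itΩ} W_{k₁-k₂} v_{k₁} conj(v_{k₂}) Ψ_{k₃}` (sum over `k₁ - k₂ + k₃ = k`,
`k₂ ∉ {k₁, k₃}`), then `∑_k |Ψ_k(t)|²` is constant in time. -/
theorem random_averaging_mass_conservation
    (N L : ℝ) (hN : 1 ≤ N) (hL : 1 ≤ L)
    (W : (Fin 3 → ℤ) → ℝ) (hW : ∀ j, W (-j) = W j)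
    (v : ℝ → (Fin 3 → ℤ) → ℂ)
    (hv : ∀ ℓ : Fin 3 → ℤ, Continuous (fun t => v t ℓ))
    (hvsupp : ∀ ℓ : Fin 3 → ℤ, L < jap3 ℓ → ∀ t : ℝ, v t ℓ = 0)
    (Ψ : ℝ → (Fin 3 → ℤ) → ℂ)
    (hreg : ∀ k, ContDiff ℝ 1 (fun t => Ψ t k))
    (hsupp : ∀ k : Fin 3 → ℤ, ¬(N / 2 < jap3 k ∧ jap3 k ≤ N) → ∀ t : ℝ, Ψ t k = 0)
    (heq : ∀ t : ℝ, ∀ k : Fin 3 → ℤ, N / 2 < jap3 k → jap3 k ≤ N →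
      deriv (fun s => Ψ s k) t =
        -Complex.I *
          ∑' q : ((Fin 3 → ℤ) × (Fin 3 → ℤ)) × (Fin 3 → ℤ),
            if q.1.1 - q.1.2 + q.2 = k ∧ q.1.2 ≠ q.1.1 ∧ q.1.2 ≠ q.2 then
              Complex.exp (Complex.I * t *
                  ((nsq3 q.1.1 - nsq3 q.1.2 + nsq3 q.2 - nsq3 k : ℤ) : ℂ)) *
                (W (q.1.1 - q.1.2) : ℂ) * v t q.1.1 * (starRingEnd ℂ) (v t q.1.2) * Ψ t q.2
            else 0) :
    ∀ s t : ℝ, (∑' k : Fin 3 → ℤ, ‖Ψ s k‖ ^ 2) = ∑' k : Fin 3 → ℤ, ‖Ψ t k‖ ^ 2 := by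
  classical
  set SN : Finset (Fin 3 → ℤ) := jbox N with hSNdef
  set SL : Finset (Fin 3 → ℤ) := jbox L with hSLdef
  set T : Finset (((Fin 3 → ℤ) × (Fin 3 → ℤ)) × (Fin 3 → ℤ)) := (SL ×ˢ SL) ×ˢ SN with hTdef
  have hΨ0 : ∀ k ∉ SN, ∀ t : ℝ, Ψ t k = 0 := fun k hk t =>
    hsupp k (fun h => absurd h.2 (not_le.mpr (lt_jap3_of_not_mem_jbox hk))) t
  -- reduce the tsums to finite sums
  have htsum : ∀ s : ℝ, (∑' k : Fin 3 → ℤ, ‖Ψ s k‖ ^ 2)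
      = ∑ k ∈ SN, ((starRingEnd ℂ) (Ψ s k) * Ψ s k).re := by
    intro s
    rw [tsum_eq_sum (s := SN) (fun k hk => by simp [hΨ0 k hk s])]
    refine Finset.sum_congr rfl fun k _ => ?_
    rw [mul_comm, Complex.mul_conj, Complex.ofReal_re, Complex.sq_norm]
  -- the function g
  set g : ℝ → (((Fin 3 → ℤ) × (Fin 3 → ℤ)) × (Fin 3 → ℤ)) → (Fin 3 → ℤ) → ℂ :=
    fun t q k =>
      if q.1.1 - q.1.2 + q.2 = k ∧ q.1.2 ≠ q.1.1 ∧ q.1.2 ≠ q.2 then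
        (starRingEnd ℂ) (Ψ t k) *
          (Complex.exp (Complex.I * t *
              ((nsq3 q.1.1 - nsq3 q.1.2 + nsq3 q.2 - nsq3 k : ℤ) : ℂ)) *
            (W (q.1.1 - q.1.2) : ℂ) * v t q.1.1 * (starRingEnd ℂ) (v t q.1.2) * Ψ t q.2)
      else 0 with hgdef
  -- termwise identity
  have key : ∀ t : ℝ, ∀ k ∈ SN, (starRingEnd ℂ) (Ψ t k) * deriv (fun s => Ψ s k) t
      = -Complex.I * ∑ q ∈ T, g t q k := by
    intro t k _
    by_cases hcond : N / 2 < jap3 k ∧ jap3 k ≤ N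
    · rw [heq t k hcond.1 hcond.2]
      have hoff : ∀ q ∉ T,
          (if q.1.1 - q.1.2 + q.2 = k ∧ q.1.2 ≠ q.1.1 ∧ q.1.2 ≠ q.2 then
              Complex.exp (Complex.I * t *
                  ((nsq3 q.1.1 - nsq3 q.1.2 + nsq3 q.2 - nsq3 k : ℤ) : ℂ)) *
                (W (q.1.1 - q.1.2) : ℂ) * v t q.1.1 * (starRingEnd ℂ) (v t q.1.2) * Ψ t q.2
            else 0) = 0 := by
        intro q hq
        by_cases hc : q.1.1 - q.1.2 + q.2 = k ∧ q.1.2 ≠ q.1.1 ∧ q.1.2 ≠ q.2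
        · rw [if_pos hc]
          simp only [hTdef, Finset.mem_product, not_and_or] at hq
          rcases hq with (h1 | h1) | h3
          · rw [hvsupp q.1.1 (lt_jap3_of_not_mem_jbox h1) t]; ring
          · rw [hvsupp q.1.2 (lt_jap3_of_not_mem_jbox h1) t, map_zero]; ring
          · rw [hΨ0 q.2 h3 t]; ring
        · rw [if_neg hc]
      rw [tsum_eq_sum (s := T) hoff, mul_left_comm, Finset.mul_sum]
      congr 1
      refine Finset.sum_congr rfl fun q _ => ?_
      simp only [hgdef]
      by_cases hc : q.1.1 - q.1.2 + q.2 = k ∧ q.1.2 ≠ q.1.1 ∧ q.1.2 ≠ q.2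
      · rw [if_pos hc, if_pos hc]
      · rw [if_neg hc, if_neg hc, mul_zero]
    · have h0 := hsupp k hcond t
      have : ∀ q ∈ T, g t q k = 0 := by
        intro q _
        simp only [hgdef]
        by_cases hc : q.1.1 - q.1.2 + q.2 = k ∧ q.1.2 ≠ q.1.1 ∧ q.1.2 ≠ q.2
        · rw [if_pos hc, h0, map_zero, zero_mul]
        · rw [if_neg hc]
      rw [Finset.sum_eq_zero this, h0, map_zero, zero_mul, mul_zero]
  -- the big sum and its reality
  have hG : ∀ t : ℝ, ∑ k ∈ SN, (starRingEnd ℂ) (Ψ t k) * deriv (fun s => Ψ s k) t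
      = -Complex.I * ∑ p ∈ SN ×ˢ T, g t p.2 p.1 := by
    intro t
    rw [Finset.sum_congr rfl (key t), ← Finset.mul_sum]
    congr 1
    rw [Finset.sum_product]
  -- symmetry: the big sum is real
  have hsym : ∀ t : ℝ, (starRingEnd ℂ) (∑ p ∈ SN ×ˢ T, g t p.2 p.1)
      = ∑ p ∈ SN ×ˢ T, g t p.2 p.1 := by
    intro t
    rw [map_sum]
    refine Finset.sum_nbij'
      (i := fun p => (p.2.2, ((p.2.1.2, p.2.1.1), p.1)))
      (j := fun p => (p.2.2, ((p.2.1.2, p.2.1.1), p.1))) ?_ ?_ ?_ ?_ ?_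
    · intro p hp
      simp only [hTdef, Finset.mem_product] at hp ⊢
      tauto
    · intro p hp
      simp only [hTdef, Finset.mem_product] at hp ⊢
      tauto
    · intro p _; rfl
    · intro p _; rfl
    · rintro ⟨k, ⟨⟨k₁, k₂⟩, k₃⟩⟩ _
      simp only [hgdef]
      by_cases hc : k₁ - k₂ + k₃ = k ∧ k₂ ≠ k₁ ∧ k₂ ≠ k₃
      · have hc' : k₂ - k₁ + k = k₃ ∧ k₁ ≠ k₂ ∧ k₁ ≠ k := by
          obtain ⟨h1, h2, h3⟩ := hc
          refine ⟨by linear_combination -h1, Ne.symm h2, fun hx => h3 ?_⟩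
          linear_combination hx - h1
        rw [if_pos hc, if_pos hc']
        have hWeq : ((W (k₂ - k₁) : ℝ) : ℂ) = ((W (k₁ - k₂) : ℝ) : ℂ) := by
          rw [show k₂ - k₁ = -(k₁ - k₂) by abel, hW]
        have hexp : Complex.exp (Complex.I * t *
              ((nsq3 k₂ - nsq3 k₁ + nsq3 k - nsq3 k₃ : ℤ) : ℂ))
            = (starRingEnd ℂ) (Complex.exp (Complex.I * t *
              ((nsq3 k₁ - nsq3 k₂ + nsq3 k₃ - nsq3 k : ℤ) : ℂ))) := by
          rw [← Complex.exp_conj]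
          congr 1
          rw [map_mul, map_mul, Complex.conj_I, Complex.conj_ofReal, map_intCast]
          push_cast
          ring
        rw [hexp, hWeq]
        simp only [map_mul, Complex.conj_conj, Complex.conj_ofReal]
        ring
      · have hc' : ¬ (k₂ - k₁ + k = k₃ ∧ k₁ ≠ k₂ ∧ k₁ ≠ k) := by
          intro hx
          obtain ⟨h1, h2, h3⟩ := hx
          exact hc ⟨by linear_combination -h1, Ne.symm h2, fun hy => h3 (by linear_combination hy - h1)⟩
        rw [if_neg hc, if_neg hc', map_zero]
  -- the mass is constant
  have hconst : ∀ s t : ℝ,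
      (∑ k ∈ SN, ((starRingEnd ℂ) (Ψ s k) * Ψ s k).re)
        = ∑ k ∈ SN, ((starRingEnd ℂ) (Ψ t k) * Ψ t k).re := by
    have hderiv : ∀ t : ℝ,
        HasDerivAt (fun u => ∑ k ∈ SN, ((starRingEnd ℂ) (Ψ u k) * Ψ u k).re) 0 t := by
      intro t
      have hterm : ∀ k ∈ SN, HasDerivAt (fun s => ((starRingEnd ℂ) (Ψ s k) * Ψ s k).re)
          (2 * ((starRingEnd ℂ) (Ψ t k) * deriv (fun s => Ψ s k) t).re) t := by
        intro k _
        have hf : HasDerivAt (fun s => Ψ s k) (deriv (fun s => Ψ s k) t) t :=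
          (((hreg k).differentiable one_ne_zero) t).hasDerivAt
        have hconj : HasDerivAt (fun s => (starRingEnd ℂ) (Ψ s k))
            ((starRingEnd ℂ) (deriv (fun s => Ψ s k) t)) t := hf.star
        have hmul := hconj.mul hf
        have hre := Complex.reCLM.hasFDerivAt.comp_hasDerivAt t hmul
        have hval : Complex.reCLM ((starRingEnd ℂ) (deriv (fun s => Ψ s k) t) * Ψ t k
              + (starRingEnd ℂ) (Ψ t k) * deriv (fun s => Ψ s k) t)
            = 2 * ((starRingEnd ℂ) (Ψ t k) * deriv (fun s => Ψ s k) t).re := by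
          simp [Complex.add_re, Complex.mul_re, Complex.conj_re, Complex.conj_im]
          ring
        exact hval ▸ hre
      have hzero : ∑ k ∈ SN,
          2 * ((starRingEnd ℂ) (Ψ t k) * deriv (fun s => Ψ s k) t).re = 0 := by
        rw [← Finset.mul_sum, ← Complex.re_sum, hG t]
        have him : (∑ p ∈ SN ×ˢ T, g t p.2 p.1).im = 0 :=
          Complex.conj_eq_iff_im.mp (hsym t)
        simp [Complex.mul_re, Complex.neg_re, Complex.neg_im, Complex.I_re, Complex.I_im, him]
      exact hzero ▸ HasDerivAt.fun_sum hterm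
    intro s t
    exact is_const_of_deriv_eq_zero (fun x => (hderiv x).differentiableAt)
      (fun x => (hderiv x).deriv) s t
  intro s t
  rw [htsum s, htsum t]
  exact hconst s t
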